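/- In an induced wheel of G' (the weak color-avoiding connectivity graph) with center u and outer cycle w_1,...,w_l (l ≥ 4): if w_1 and w_3 are not weakly color-avoiding connected, then the only color whose removal can disconnect them is the color of w_2, and moreover the center u must have the same color as w_2. -/

import Mathlib

/-- `u` and `v` are weakly `i`-avoiding connected. -/
def WeaklyAvoids {V C : Type} (G : SimpleGraph V) (c : V → C) (i : C) (u v : V) : Prop :=
  c u = i ∨ c v = i ∨ ∃ p : G.Walk u v, ∀ x ∈ p.support, c x ≠ i

/-- `u` and `v` are weakly color-avoiding connected. -/
def WeaklyCAConnected {V C : Type} (G : SimpleGraph V) (c : V → C) (u v : V) : Prop :=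
  G.Reachable u v ∧ ∀ i : C, WeaklyAvoids G c i u v

/-- The derived graph `G'`: adjacency is weak color-avoiding connectivity. -/
def weakGraph {V C : Type} (G : SimpleGraph V) (c : V → C) : SimpleGraph V where
  Adj u v := u ≠ v ∧ WeaklyCAConnected G c u v
  symm := by
    constructor
    rintro u v ⟨h, hr, hw⟩
    refine ⟨h.symm, hr.symm, fun i => ?_⟩
    rcases hw i with h1 | h1 | ⟨p, hp⟩
    · exact Or.inr (Or.inl h1)
    · exact Or.inl h1
    · exact Or.inr (Or.inr ⟨p.reverse, fun x hx => hp x (by simpa using hx)⟩)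
  loopless := by
    constructor
    rintro u ⟨h, -⟩
    exact h rfl

/-! Walks avoiding color `i` concatenate through any vertex not of color `i`. So a color `i`
separating `w 0` from `w 2` must be the color of every vertex that is weakly color-avoiding
connected to both: of `w 1` along the outer cycle, and of the center `u` along the spokes. -/

namespace WeaklyAvoids

variable {V C : Type} {G : SimpleGraph V} {c : V → C} {i : C} {a b d : V}

theorem symm (h : WeaklyAvoids G c i a b) : WeaklyAvoids G c i b a := by
  rcases h with ha | hb | ⟨p, hp⟩
  · exact Or.inr (Or.inl ha)
  · exact Or.inl hb
  · exact Or.inr (Or.inr ⟨p.reverse, fun x hx => hp x (by simpa using hx)⟩)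

theorem trans (hab : WeaklyAvoids G c i a b) (hbd : WeaklyAvoids G c i b d) (hb : c b ≠ i) :
    WeaklyAvoids G c i a d := by
  rcases hab with ha | hb' | ⟨p, hp⟩
  · exact Or.inl ha
  · exact absurd hb' hb
  rcases hbd with hb' | hd | ⟨q, hq⟩
  · exact absurd hb' hb
  · exact Or.inr (Or.inl hd)
  refine Or.inr (Or.inr ⟨p.append q, fun x hx => ?_⟩)
  rcases (SimpleGraph.Walk.mem_support_append_iff p q).mp hx with hx | hx
  exacts [hp x hx, hq x hx]

theorem color_eq_of_not_weaklyAvoids (had : ¬ WeaklyAvoids G c i a d)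
    (hab : WeaklyAvoids G c i a b) (hbd : WeaklyAvoids G c i b d) : c b = i :=
  not_not.mp fun hb => had (hab.trans hbd hb)

end WeaklyAvoids

theorem exists_not_weaklyAvoids_of_not_weaklyCAConnected {V C : Type} {G : SimpleGraph V}
    {c : V → C} {a b : V} (hab : ¬ WeaklyCAConnected G c a b) (hr : G.Reachable a b) :
    ∃ i, ¬ WeaklyAvoids G c i a b := by
  by_contra! h
  exact hab ⟨hr, h⟩

theorem wheel_center_color_general {V C : Type} (G : SimpleGraph V) (c : V → C)
    (l : ℕ) (u : V) (w : ZMod l → V)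
    (hspoke : ∀ j, (weakGraph G c).Adj u (w j))
    (hcyc : ∀ j, (weakGraph G c).Adj (w j) (w (j + 1)))
    (hnc : ¬ WeaklyCAConnected G c (w 0) (w 2)) :
    (∀ i : C, ¬ WeaklyAvoids G c i (w 0) (w 2) → i = c (w 1)) ∧ c u = c (w 1) := by
  have h01 : WeaklyCAConnected G c (w 0) (w 1) := by simpa using (hcyc 0).2
  have h12 : WeaklyCAConnected G c (w 1) (w 2) := by
    simpa [one_add_one_eq_two] using (hcyc 1).2
  have hw1 : ∀ i : C, ¬ WeaklyAvoids G c i (w 0) (w 2) → i = c (w 1) := fun i hi =>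
    (WeaklyAvoids.color_eq_of_not_weaklyAvoids hi (h01.2 i) (h12.2 i)).symm
  refine ⟨hw1, ?_⟩
  obtain ⟨i, hi⟩ := exists_not_weaklyAvoids_of_not_weaklyCAConnected hnc (h01.1.trans h12.1)
  rw [← hw1 i hi]
  exact WeaklyAvoids.color_eq_of_not_weaklyAvoids hi ((hspoke 0).2.2 i).symm ((hspoke 2).2.2 i)

/-- In an induced wheel of `G'` with center `u` and outer cycle `w 0, w 1, ..., w (l-1)`
(`l ≥ 4`): if `w 0` and `w 2` are not weakly color-avoiding connected, then the only
color whose removal can disconnect them is `c (w 1)`, and the center `u` has the same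
color as `w 1`. -/
theorem wheel_center_color {V C : Type} (G : SimpleGraph V) (c : V → C)
    (l : ℕ) (hl : 4 ≤ l) (u : V) (w : ZMod l → V)
    (hinj : Function.Injective w)
    (hne : ∀ j, w j ≠ u)
    (hspoke : ∀ j, (weakGraph G c).Adj u (w j))
    (hcyc : ∀ j, (weakGraph G c).Adj (w j) (w (j + 1)))
    (hind : ∀ j k, k ≠ j → k ≠ j + 1 → k + 1 ≠ j → ¬ (weakGraph G c).Adj (w j) (w k))
    (hnc : ¬ WeaklyCAConnected G c (w 0) (w 2)) :
    (∀ i : C, ¬ WeaklyAvoids G c i (w 0) (w 2) → i = c (w 1)) ∧ c u = c (w 1) :=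
  wheel_center_color_general G c l u w hspoke hcyc hnc
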